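/- Iterated weak convergence of kernels (only-if direction): let E be a Polish space and K_N, K transition probability kernels on E such that for every bounded continuous f : E → ℝ and every convergent sequence x_N → x in E, ∫ f dK_N(x_N, ·) → ∫ f dK(x, ·). Then for every j ≥ 1 and every weakly convergent sequence of probability measures ν_N ⇒ ν on E, one has ν_N K_N^j ⇒ ν K^j weakly. -/

import Mathlib

/-!
By induction on `j` it suffices to treat one step. Writing `g_N x = ∫ f dK_N(x, ·)` and
`g x = ∫ f dK(x, ·)`, we have `∫ f d(ν_N K_N) = ∫ g_N dν_N`, and the hypothesis says that `g_N → g`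
continuously. Hence `g` is continuous and `g_N → g` uniformly on compact sets. A weakly convergent
sequence on a Polish space is tight, so `∫ (g_N - g) dν_N → 0`, while `∫ g dν_N → ∫ g dν` by weak
convergence.
-/

open MeasureTheory ProbabilityTheory BoundedContinuousFunction

/-- The `j`-fold action of a transition kernel on a measure: `kernelIter K j ν = ν K^j`. -/
noncomputable def kernelIter {E : Type*} [MeasurableSpace E]
    (K : Kernel E E) : ℕ → Measure E → Measure E
  | 0, ν => ν
  | (j + 1), ν => (kernelIter K j ν).bind K

open Filter Topology

section ContinuousConvergence

variable {X Y : Type*} [TopologicalSpace X]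

def TendstoContinuously [TopologicalSpace Y] (F : ℕ → X → Y) (G : X → Y) : Prop :=
  ∀ (x : ℕ → X) (x₀ : X), Tendsto x atTop (𝓝 x₀) → Tendsto (fun N => F N (x N)) atTop (𝓝 (G x₀))

lemma tendsto_extend_of_strictMono {φ : ℕ → ℕ} (hφ : StrictMono φ) {y : ℕ → X} {x₀ : X}
    (hy : Tendsto y atTop (𝓝 x₀)) :
    Tendsto (Function.extend φ y fun _ => x₀) atTop (𝓝 x₀) := by
  refine tendsto_atTop'.2 fun U hU => ?_
  obtain ⟨a, ha⟩ := tendsto_atTop'.1 hy U hU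
  refine ⟨φ a, fun N hN => ?_⟩
  by_cases hN' : ∃ k, φ k = N
  · obtain ⟨k, rfl⟩ := hN'
    rw [hφ.injective.extend_apply]
    exact ha k (hφ.le_iff_le.1 hN)
  · rw [Function.extend_apply' _ _ _ hN']
    exact mem_of_mem_nhds hU

lemma TendstoContinuously.comp_strictMono [TopologicalSpace Y] {F : ℕ → X → Y} {G : X → Y}
    (hF : TendstoContinuously F G) {φ : ℕ → ℕ} (hφ : StrictMono φ) :
    TendstoContinuously (fun k => F (φ k)) G := by
  intro y x₀ hy
  have := (hF _ x₀ (tendsto_extend_of_strictMono hφ hy)).comp hφ.tendsto_atTop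
  simpa only [Function.comp_def, hφ.injective.extend_apply] using this

variable [FirstCountableTopology X] [PseudoMetricSpace Y] {F : ℕ → X → Y} {G : X → Y}

lemma TendstoContinuously.continuous (hF : TendstoContinuously F G) : Continuous G := by
  refine continuous_iff_seqContinuous.2 fun x x₀ hx => ?_
  have hclose (k : ℕ) : ∀ᶠ N in atTop, dist (F N (x k)) (G (x k)) < 1 / (k + 1) :=
    Metric.tendsto_nhds.1 (hF _ _ tendsto_const_nhds) _ Nat.one_div_pos_of_nat
  obtain ⟨φ, hφ, hφclose⟩ := extraction_forall_of_eventually hclose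
  refine tendsto_of_tendsto_of_dist (hF.comp_strictMono hφ x x₀ hx) ?_
  exact squeeze_zero (fun _ => dist_nonneg) (fun k => (hφclose k).le)
    tendsto_one_div_add_atTop_nhds_zero_nat

lemma TendstoContinuously.tendstoUniformlyOn (hF : TendstoContinuously F G)
    {C : Set X} (hC : IsCompact C) : TendstoUniformlyOn F G atTop C := by
  refine Metric.tendstoUniformlyOn_iff.2 fun ε hε => ?_
  by_contra hfar
  simp only [not_eventually, not_forall, not_lt, exists_prop] at hfar
  obtain ⟨φ, hφ, hbad⟩ := extraction_of_frequently_atTop hfar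
  choose x hxC hx using hbad
  obtain ⟨x₀, -, ψ, hψ, hxψ⟩ := hC.tendsto_subseq hxC
  have hlim : Tendsto (fun k => dist (G (x (ψ k))) (F (φ (ψ k)) (x (ψ k)))) atTop (𝓝 0) := by
    simpa using ((hF.continuous.tendsto x₀).comp hxψ).dist
      (hF.comp_strictMono (hφ.comp hψ) _ x₀ hxψ)
  obtain ⟨k, hk⟩ := (hlim.eventually (gt_mem_nhds hε)).exists
  exact (hx (ψ k)).not_gt hk

end ContinuousConvergence

section WeakConvergence

variable {X : Type*} [MeasurableSpace X]

lemma isTightMeasureSet_range_of_tendsto [TopologicalSpace X] [PolishSpace X] [BorelSpace X]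
    {P : ℕ → ProbabilityMeasure X} {P₀ : ProbabilityMeasure X} (hP : Tendsto P atTop (𝓝 P₀)) :
    IsTightMeasureSet (Set.range fun N => (P N : Measure X)) := by
  let _ := TopologicalSpace.upgradeIsCompletelyMetrizable X
  have hcompact := hP.isCompact_insert_range
  refine (isTightMeasureSet_of_isCompact_closure (hcompact.isClosed.closure_eq ▸ hcompact)).subset ?_
  rintro _ ⟨N, rfl⟩
  exact ⟨P N, Set.mem_insert_of_mem _ ⟨N, rfl⟩, rfl⟩

lemma norm_integral_le_of_norm_le_on_compl {E : Type*} [NormedAddCommGroup E] [NormedSpace ℝ E]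
    {μ : Measure X} [IsFiniteMeasure μ] {h : X → E} (hh : Integrable h μ) {C : Set X}
    (hC : MeasurableSet C) {a b : ℝ} (ha : ∀ x ∈ C, ‖h x‖ ≤ a) (hb : ∀ x, ‖h x‖ ≤ b) :
    ‖∫ x, h x ∂μ‖ ≤ a * μ.real C + b * μ.real Cᶜ := by
  rw [← integral_add_compl hC hh]
  exact (norm_add_le _ _).trans (add_le_add
    (norm_setIntegral_le_of_norm_le_const (measure_lt_top μ C) ha)
    (norm_setIntegral_le_of_norm_le_const (measure_lt_top μ Cᶜ) fun x _ => hb x))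

theorem tendsto_integral_of_tendstoContinuously [TopologicalSpace X] [PolishSpace X] [BorelSpace X]
    {P : ℕ → ProbabilityMeasure X} {P₀ : ProbabilityMeasure X} (hP : Tendsto P atTop (𝓝 P₀))
    {F : ℕ → X → ℝ} {G : X →ᵇ ℝ} {M : ℝ} (hFm : ∀ N, AEStronglyMeasurable (F N) (P N))
    (hFM : ∀ N x, ‖F N x‖ ≤ M) (hF : TendstoContinuously F G) :
    Tendsto (fun N => ∫ x, F N x ∂(P N)) atTop (𝓝 (∫ x, G x ∂P₀)) := by
  have hFint (N : ℕ) : Integrable (F N) (P N) := .of_bound (hFm N) M (ae_of_all _ (hFM N))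
  have hB (N : ℕ) (x : X) : ‖F N x - G x‖ ≤ M + ‖G‖ :=
    (norm_sub_le _ _).trans (add_le_add (hFM N x) (G.norm_coe_le_norm x))
  have hBnonneg : 0 ≤ M + ‖G‖ := by
    have := nonempty_of_isProbabilityMeasure (P₀ : Measure X)
    exact (norm_nonneg _).trans (hB 0 Classical.ofNonempty)
  suffices hsmall : Tendsto (fun N => ∫ x, (F N x - G x) ∂(P N)) atTop (𝓝 0) by
    have hG := ProbabilityMeasure.tendsto_iff_forall_integral_tendsto.1 hP G
    refine (zero_add (∫ x, G x ∂P₀) ▸ hsmall.add hG).congr fun N => ?_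
    rw [integral_sub (hFint N) (G.integrable _), sub_add_cancel]
  refine NormedAddGroup.tendsto_nhds_zero.2 fun ε hε => ?_
  obtain ⟨η, hη, hBη⟩ := exists_pos_mul_lt (half_pos hε) (M + ‖G‖)
  obtain ⟨C, hC, hCη⟩ := isTightMeasureSet_iff_exists_isCompact_measure_compl_le.1
    (isTightMeasureSet_range_of_tendsto hP) (ENNReal.ofReal η) (ENNReal.ofReal_pos.2 hη)
  have hunif := Metric.tendstoUniformlyOn_iff.1 (hF.tendstoUniformlyOn hC) (ε / 2) (half_pos hε)
  filter_upwards [hunif] with N hN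
  have hCcompl : (P N : Measure X).real Cᶜ ≤ η :=
    ENNReal.toReal_le_of_le_ofReal hη.le (hCη _ ⟨N, rfl⟩)
  calc ‖∫ x, (F N x - G x) ∂(P N)‖
      ≤ ε / 2 * (P N : Measure X).real C + (M + ‖G‖) * (P N : Measure X).real Cᶜ :=
        norm_integral_le_of_norm_le_on_compl (h := fun x => F N x - G x)
          ((hFint N).sub (G.integrable _)) hC.isClosed.measurableSet
          (fun x hx => by rw [← dist_eq_norm, dist_comm]; exact (hN x hx).le) (hB N)
    _ ≤ ε / 2 * 1 + (M + ‖G‖) * η := by gcongr; exact measureReal_le_one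
    _ < ε := by linarith

end WeakConvergence

section Kernels

variable {X Y : Type*} [MeasurableSpace X] [MeasurableSpace Y]

lemma integral_bind_eq_integral_integral {E : Type*} [NormedAddCommGroup E] [NormedSpace ℝ E]
    {μ : Measure X} [SFinite μ] {κ : Kernel X Y} [IsSFiniteKernel κ] {f : Y → E}
    (hf : Integrable f (μ.bind κ)) :
    ∫ y, f y ∂(μ.bind κ) = ∫ x, ∫ y, f y ∂(κ x) ∂μ := by
  have hf_snd := (Measure.integrable_compProd_snd_iff hf.1).2 hf
  rw [← Measure.snd_compProd, Measure.snd, integral_map measurable_snd.aemeasurable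
    (by rw [← Measure.snd, Measure.snd_compProd]; exact hf.1)]
  exact Measure.integral_compProd hf_snd

instance isProbabilityMeasure_kernelIter (K : Kernel X X) [IsMarkovKernel K] (ν : Measure X)
    [IsProbabilityMeasure ν] (j : ℕ) : IsProbabilityMeasure (kernelIter K j ν) := by
  induction j with
  | zero => assumption
  | succ j _ => exact (inferInstance : IsProbabilityMeasure (K ∘ₘ kernelIter K j ν))

variable [TopologicalSpace X] [PolishSpace X] [BorelSpace X]
  {ν : ℕ → Measure X} [∀ N, IsProbabilityMeasure (ν N)] {ν₀ : Measure X} [IsProbabilityMeasure ν₀]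

theorem tendsto_integral_bind_of_tendstoContinuously [TopologicalSpace Y] [OpensMeasurableSpace Y]
    {K : ℕ → Kernel X Y} [∀ N, IsMarkovKernel (K N)] {K₀ : Kernel X Y} [IsMarkovKernel K₀]
    (f : Y →ᵇ ℝ)
    (hK : TendstoContinuously (fun N x => ∫ z, f z ∂(K N x)) fun x => ∫ z, f z ∂(K₀ x))
    (hν : ∀ g : X →ᵇ ℝ, Tendsto (fun N => ∫ x, g x ∂(ν N)) atTop (𝓝 (∫ x, g x ∂ν₀))) :
    Tendsto (fun N => ∫ y, f y ∂((ν N).bind (K N))) atTop (𝓝 (∫ y, f y ∂(ν₀.bind K₀))) := by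
  let P (N : ℕ) : ProbabilityMeasure X := ⟨ν N, inferInstance⟩
  let P₀ : ProbabilityMeasure X := ⟨ν₀, inferInstance⟩
  have hP : Tendsto P atTop (𝓝 P₀) := ProbabilityMeasure.tendsto_iff_forall_integral_tendsto.2 hν
  let G : X →ᵇ ℝ := .ofNormedAddCommGroup _ hK.continuous ‖f‖ fun x => f.norm_integral_le_norm _
  simp only [integral_bind_eq_integral_integral (f.integrable _)]
  exact tendsto_integral_of_tendstoContinuously (G := G) hP
    (fun N => f.continuous.measurable.stronglyMeasurable.integral_kernel.aestronglyMeasurable)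
    (fun N x => f.norm_integral_le_norm _) hK

theorem tendsto_integral_kernelIter {K : ℕ → Kernel X X} [∀ N, IsMarkovKernel (K N)]
    {K₀ : Kernel X X} [IsMarkovKernel K₀]
    (hK : ∀ f : X →ᵇ ℝ,
      TendstoContinuously (fun N x => ∫ z, f z ∂(K N x)) fun x => ∫ z, f z ∂(K₀ x))
    (hν : ∀ g : X →ᵇ ℝ, Tendsto (fun N => ∫ x, g x ∂(ν N)) atTop (𝓝 (∫ x, g x ∂ν₀)))
    (j : ℕ) (f : X →ᵇ ℝ) :
    Tendsto (fun N => ∫ x, f x ∂(kernelIter (K N) j (ν N))) atTop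
      (𝓝 (∫ x, f x ∂(kernelIter K₀ j ν₀))) := by
  induction j generalizing f with
  | zero => exact hν f
  | succ j ih => exact tendsto_integral_bind_of_tendstoContinuously f (hK f) ih

end Kernels

/-- Iterated weak convergence of kernels (only-if direction): if
`∫ f dK_N(x_N,·) → ∫ f dK(x,·)` for every bounded continuous `f` and every `x_N → x`,
then `ν_N K_N^j ⇒ ν K^j` whenever `ν_N ⇒ ν`, for every `j ≥ 1`. -/
theorem kernel_iterated_weak_convergence
    {E : Type*} [TopologicalSpace E] [PolishSpace E] [MeasurableSpace E] [BorelSpace E]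
    (K : ℕ → Kernel E E) [∀ N, IsMarkovKernel (K N)]
    (K₀ : Kernel E E) [IsMarkovKernel K₀]
    (hker : ∀ f : E →ᵇ ℝ, ∀ (x : ℕ → E) (x₀ : E), Filter.Tendsto x Filter.atTop (nhds x₀) →
      Filter.Tendsto (fun N => ∫ z, f z ∂(K N (x N))) Filter.atTop
        (nhds (∫ z, f z ∂(K₀ x₀)))) :
    ∀ j : ℕ, 1 ≤ j →
      ∀ (ν : ℕ → Measure E), (∀ N, IsProbabilityMeasure (ν N)) →
      ∀ (ν₀ : Measure E), IsProbabilityMeasure ν₀ →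
      (∀ g : E →ᵇ ℝ, Filter.Tendsto (fun N => ∫ x, g x ∂(ν N)) Filter.atTop
        (nhds (∫ x, g x ∂ν₀))) →
      ∀ f : E →ᵇ ℝ,
        Filter.Tendsto (fun N => ∫ x, f x ∂(kernelIter (K N) j (ν N))) Filter.atTop
          (nhds (∫ x, f x ∂(kernelIter K₀ j ν₀))) :=
  fun j _ _ _ _ _ hν => tendsto_integral_kernelIter hker hν j
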